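/- arXiv:2311.02425 — 5 statements merged into one kernel-verified Lean document; each statement's English description precedes it below -/
import Mathlib

section
/- Let G be a unimodular locally compact second countable group with Haar measure λ (both left- and right-invariant) and a left-invariant proper metric d_G compatible with its topology; let B(r) denote the open d_G-ball of radius r centered at the identity. Let 0 < r_0 < r_1 < r_2 and δ > 0 satisfy r_0 + r_1 < r_2 and δ·λ(B(r_2)) < (1−δ)·λ(B(r_0)). If W_0 ⊆ B(r_0) and W_2 ⊆ B(r_2) are measurable subsets with λ(W_0) > (1−δ)·λ(B(r_0)) and λ(W_2) > (1−δ)·λ(B(r_2)), then the product set W_0·W_2 = {w_0·w_2 : w_0 ∈ W_0, w_2 ∈ W_2} contains B(r_1). -/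
open MeasureTheory Metric Pointwise

/-- A Haar measure that is also right-invariant (i.e., on a "unimodular" situation)
is invariant under inversion. -/
lemma unimodular_isInvInvariant
    {G : Type*} [Group G] [TopologicalSpace G] [IsTopologicalGroup G]
    [SecondCountableTopology G] [LocallyCompactSpace G]
    [MeasurableSpace G] [BorelSpace G]
    (μ : Measure G) [μ.IsHaarMeasure] [μ.IsMulRightInvariant] :
    μ.IsInvInvariant := by
  constructor
  let c : ENNReal := Measure.haarScalarFactor μ.inv μ
  have hc : μ.inv = c • μ := Measure.isMulLeftInvariant_eq_smul μ.inv μ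
  have : Measure.map Inv.inv (Measure.map Inv.inv μ) = c ^ 2 • μ := by
    rw [← μ.inv_def, hc, Measure.map_smul, ← μ.inv_def, hc, smul_smul, pow_two]
  have μeq : μ = c ^ 2 • μ := by
    rw [Measure.map_map continuous_inv.measurable continuous_inv.measurable] at this
    simpa only [inv_involutive, Function.Involutive.comp_self, Measure.map_id]
  have K : TopologicalSpace.PositiveCompacts G := Classical.arbitrary _
  have h2 : c ^ 2 * μ K = 1 ^ 2 * μ K := by
    conv_rhs => rw [μeq]
    simp
  have h3 : c ^ 2 = 1 ^ 2 :=
    (ENNReal.mul_left_inj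
      (Measure.measure_pos_of_nonempty_interior _ K.interior_nonempty).ne'
      K.isCompact.measure_lt_top.ne).1 h2
  have hc1 : c = 1 := (ENNReal.pow_right_strictMono two_ne_zero).injective h3
  rw [hc, hc1, one_smul]

/-- Lemma on product sets in a unimodular lcsc group (Lemma 3.2 / `L:group`):
if `W₀ ⊆ B(r₀)` and `W₂ ⊆ B(r₂)` occupy all but a `δ`-fraction of the respective
balls around the identity (for a left- and right-invariant Haar measure `lam`),
with `r₀ + r₁ < r₂` and `δ·lam(B(r₂)) < (1-δ)·lam(B(r₀))`,
then `W₀ * W₂ ⊇ B(r₁)`. -/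
theorem product_set_covers_ball
    {G : Type*} [Group G] [MetricSpace G] [IsTopologicalGroup G]
    [SecondCountableTopology G] [LocallyCompactSpace G] [ProperSpace G]
    [MeasurableSpace G] [BorelSpace G]
    (lam : Measure G) [lam.IsHaarMeasure] [lam.IsMulRightInvariant]
    (hleft : ∀ h x y : G, dist (h * x) (h * y) = dist x y)
    (r₀ r₁ r₂ δ : ℝ)
    (hr₀ : 0 < r₀) (hr₀₁ : r₀ < r₁) (hr₁₂ : r₁ < r₂) (hδ : 0 < δ)
    (hsum : r₀ + r₁ < r₂)
    (hballs : ENNReal.ofReal δ * lam (ball (1 : G) r₂)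
      < ENNReal.ofReal (1 - δ) * lam (ball (1 : G) r₀))
    (W₀ W₂ : Set G) (hW₀m : MeasurableSet W₀) (hW₂m : MeasurableSet W₂)
    (hW₀sub : W₀ ⊆ ball (1 : G) r₀) (hW₂sub : W₂ ⊆ ball (1 : G) r₂)
    (hW₀big : ENNReal.ofReal (1 - δ) * lam (ball (1 : G) r₀) < lam W₀)
    (hW₂big : ENNReal.ofReal (1 - δ) * lam (ball (1 : G) r₂) < lam W₂) :
    ball (1 : G) r₁ ⊆ W₀ * W₂ := by
  have hinv : lam.IsInvInvariant := unimodular_isInvInvariant lam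
  -- δ ≤ 1
  have hδ1 : δ ≤ 1 := by
    by_contra h
    push_neg at h
    have : ENNReal.ofReal (1 - δ) = 0 := ENNReal.ofReal_eq_zero.2 (by linarith)
    rw [this, zero_mul] at hballs
    exact (not_lt.2 zero_le) hballs
  -- finiteness of ball measures
  have hfin₂ : lam (ball (1 : G) r₂) < ⊤ :=
    lt_of_le_of_lt (measure_mono ball_subset_closedBall)
      (isCompact_closedBall (1 : G) r₂).measure_lt_top
  intro g hg
  -- suppose g ∉ W₀ * W₂; derive contradiction
  by_contra hgmem
  -- then W₀ and g • W₂⁻¹ are disjoint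
  have hdisj : ∀ x ∈ W₀, x ∉ g • W₂⁻¹ := by
    intro x hx hx'
    obtain ⟨y, hy, rfl⟩ := hx'
    exact hgmem ⟨g * y, hx, y⁻¹, Set.mem_inv.1 hy, by group⟩
  -- key inclusion
  have hincl : W₀ ⊆ g • (ball (1 : G) r₂ \ W₂)⁻¹ := by
    intro x hx
    refine ⟨(x⁻¹ * g)⁻¹, ?_, by simp [smul_eq_mul, mul_inv_rev, mul_inv_cancel_left]⟩
    rw [Set.mem_inv, inv_inv]
    constructor
    · rw [mem_ball]
      have h1 : dist (x⁻¹ * g) 1 = dist g x := by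
        have h := hleft x (x⁻¹ * g) 1
        simp only [mul_inv_cancel_left, mul_one] at h
        exact h.symm
      rw [h1]
      have hgx : dist g x ≤ dist g 1 + dist 1 x := dist_triangle _ _ _
      have hg1 : dist g 1 < r₁ := by simpa [mem_ball] using hg
      have hx1 : dist 1 x < r₀ := by
        have := hW₀sub hx
        rw [mem_ball] at this
        rw [dist_comm]; exact this
      calc dist g x ≤ dist g 1 + dist 1 x := hgx
        _ < r₁ + r₀ := by linarith
        _ < r₂ := by linarith
    · intro hmem
      exact hdisj x hx ⟨(x⁻¹ * g)⁻¹, by rw [Set.mem_inv, inv_inv]; exact hmem,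
        by simp [smul_eq_mul, mul_inv_rev, mul_inv_cancel_left]⟩
  -- measure estimates
  have hmeas1 : lam W₀ ≤ lam (ball (1 : G) r₂ \ W₂) := by
    calc lam W₀ ≤ lam (g • (ball (1 : G) r₂ \ W₂)⁻¹) := measure_mono hincl
      _ = lam ((ball (1 : G) r₂ \ W₂)⁻¹) := by rw [measure_smul]
      _ = lam (ball (1 : G) r₂ \ W₂) := Measure.measure_inv lam _
  have hmeas2 : lam (ball (1 : G) r₂ \ W₂) ≤ ENNReal.ofReal δ * lam (ball (1 : G) r₂) := by
    rw [measure_diff hW₂sub hW₂m.nullMeasurableSet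
      (lt_of_le_of_lt (measure_mono hW₂sub) hfin₂).ne]
    rw [tsub_le_iff_right]
    have hsplit : lam (ball (1 : G) r₂)
        = ENNReal.ofReal δ * lam (ball (1 : G) r₂)
          + ENNReal.ofReal (1 - δ) * lam (ball (1 : G) r₂) := by
      rw [← add_mul, ← ENNReal.ofReal_add hδ.le (by linarith)]
      norm_num
    nth_rewrite 1 [hsplit]
    exact add_le_add_right hW₂big.le _
  exact lt_irrefl _ ((hmeas1.trans hmeas2).trans_lt (hballs.trans hW₀big))
end

section
/- Let G be an lcsc group with Haar measure λ acting jointly continuously on a Polish metric space (X, d_X), with the action map G × X → X uniformly continuous. Let ρ be a uniformly continuous, generating, 1-bounded pseudo-metric on X and let f : G → (0,∞) be a continuous function with ∫_G f dλ = 1. Define ρ_f(x,y) = ∫_G ρ(gx,gy) f(g) dλ(g). Then ρ_f is a 1-bounded, uniformly continuous metric on X: it is symmetric, satisfies the triangle inequality, satisfies ρ_f(x,y) ≤ 1 for all x,y, is uniformly continuous as a function on X × X, and ρ_f(x,y) = 0 implies x = y. -/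
open MeasureTheory Metric

/-- Lemma (`lem:metric`, metric part): if `ρ` is a uniformly continuous, generating,
1-bounded pseudo-metric on a Polish metric space `X`, on which the lcsc group `G`
(with Haar measure `lam` and left-invariant proper metric) acts uniformly,
and `f : G → (0,∞)` is continuous with `∫ f = 1`, then
`ρ_f(x,y) = ∫ ρ(gx,gy) f(g) dλ(g)` is a 1-bounded, uniformly continuous metric on `X`:
symmetric, triangle inequality, bounded by 1, uniformly continuous on `X × X`,
and `ρ_f(x,y) = 0 → x = y`. -/
theorem rho_f_is_uniformly_continuous_bounded_metric
    {G X : Type*} [Group G] [MetricSpace G] [IsTopologicalGroup G]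
    [SecondCountableTopology G] [LocallyCompactSpace G] [ProperSpace G]
    [MeasurableSpace G] [BorelSpace G]
    (lam : Measure G) [lam.IsHaarMeasure]
    (hleft : ∀ h x y : G, dist (h * x) (h * y) = dist x y)
    [MetricSpace X] [PolishSpace X]
    [MulAction G X]
    (hact : UniformContinuous fun p : G × X => p.1 • p.2)
    (ρ : X → X → ℝ)
    (hρrefl : ∀ x, ρ x x = 0)
    (hρsymm : ∀ x y, ρ x y = ρ y x)
    (hρtri : ∀ x y z, ρ x z ≤ ρ x y + ρ y z)
    (hρnonneg : ∀ x y, 0 ≤ ρ x y)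
    (hρbdd : ∀ x y, ρ x y ≤ 1)
    (hρuc : UniformContinuous fun p : X × X => ρ p.1 p.2)
    (hρgen : ∀ x y : X, x ≠ y → ∃ g : G, 0 < ρ (g • x) (g • y))
    (f : G → ℝ) (hfcont : Continuous f) (hfpos : ∀ g, 0 < f g)
    (hfint : ∫ g, f g ∂lam = 1)
    (ρf : X → X → ℝ)
    (hρf : ∀ x y, ρf x y = ∫ g, ρ (g • x) (g • y) * f g ∂lam) :
    (∀ x y, ρf x y = ρf y x) ∧
    (∀ x y z, ρf x z ≤ ρf x y + ρf y z) ∧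
    (∀ x y, ρf x y ≤ 1) ∧
    (UniformContinuous fun p : X × X => ρf p.1 p.2) ∧
    (∀ x y, ρf x y = 0 → x = y) := by
  -- f is integrable (else its integral would be 0 ≠ 1)
  have hf_int : Integrable f lam := by
    by_contra h
    rw [integral_undef h] at hfint
    exact one_ne_zero hfint.symm
  -- continuity of the integrands
  have horb : ∀ x : X, Continuous fun g : G => g • x := fun x =>
    hact.continuous.comp (continuous_id.prodMk continuous_const)
  have hcont : ∀ x y : X, Continuous fun g : G => ρ (g • x) (g • y) := fun x y =>
    hρuc.continuous.comp ((horb x).prodMk (horb y))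
  have hcontf : ∀ x y : X, Continuous fun g : G => ρ (g • x) (g • y) * f g := fun x y =>
    (hcont x y).mul hfcont
  -- integrability of the integrands
  have hint : ∀ x y : X, Integrable (fun g : G => ρ (g • x) (g • y) * f g) lam := by
    intro x y
    refine hf_int.mono (hcontf x y).aestronglyMeasurable ?_
    filter_upwards with g
    have h1 : 0 ≤ ρ (g • x) (g • y) * f g :=
      mul_nonneg (hρnonneg _ _) (hfpos g).le
    have h2 : ρ (g • x) (g • y) * f g ≤ f g := by
      calc ρ (g • x) (g • y) * f g ≤ 1 * f g :=
            mul_le_mul_of_nonneg_right (hρbdd _ _) (hfpos g).le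
        _ = f g := one_mul _
    rw [Real.norm_eq_abs, Real.norm_eq_abs, abs_of_nonneg h1, abs_of_nonneg (hfpos g).le]
    exact h2
  refine ⟨?_, ?_, ?_, ?_, ?_⟩
  · -- symmetry
    intro x y
    rw [hρf, hρf]
    congr 1
    funext g
    rw [hρsymm]
  · -- triangle inequality
    intro x y z
    rw [hρf, hρf, hρf, ← integral_add (hint x y) (hint y z)]
    refine integral_mono (hint x z) ((hint x y).add (hint y z)) ?_
    intro g
    simp only [Pi.add_apply]
    rw [← add_mul]
    exact mul_le_mul_of_nonneg_right (hρtri _ _ _) (hfpos g).le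
  · -- bounded by 1
    intro x y
    rw [hρf, ← hfint]
    refine integral_mono (hint x y) hf_int ?_
    intro g
    calc ρ (g • x) (g • y) * f g ≤ 1 * f g :=
          mul_le_mul_of_nonneg_right (hρbdd _ _) (hfpos g).le
      _ = f g := one_mul _
  · -- uniform continuity
    rw [Metric.uniformContinuous_iff]
    intro ε hε
    -- get η from uniform continuity of ρ for ε/2
    obtain ⟨η, hη, hηρ⟩ := Metric.uniformContinuous_iff.1 hρuc (ε/2) (by linarith)
    -- get δ from uniform continuity of action for η
    obtain ⟨δ, hδ, hδa⟩ := Metric.uniformContinuous_iff.1 hact η hη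
    refine ⟨δ, hδ, ?_⟩
    intro p q hpq
    have hmove : ∀ (g : G) (a b : X), dist a b < δ → dist (g • a) (g • b) < η := by
      intro g a b hab
      have : dist ((g, a) : G × X) (g, b) < δ := by
        rw [Prod.dist_eq]
        simp only [dist_self]
        rw [max_eq_right dist_nonneg]
        exact hab
      exact hδa this
    have key : ∀ g : G, |ρ (g • p.1) (g • p.2) - ρ (g • q.1) (g • q.2)| ≤ ε/2 := by
      intro g
      have h1 : dist p.1 q.1 < δ := lt_of_le_of_lt (le_max_left _ _) (by rwa [Prod.dist_eq] at hpq)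
      have h2 : dist p.2 q.2 < δ := lt_of_le_of_lt (le_max_right _ _) (by rwa [Prod.dist_eq] at hpq)
      have : dist ((g • p.1, g • p.2) : X × X) (g • q.1, g • q.2) < η := by
        rw [Prod.dist_eq]
        exact max_lt (hmove g _ _ h1) (hmove g _ _ h2)
      have := hηρ this
      rw [Real.dist_eq] at this
      exact this.le
    rw [Real.dist_eq, hρf, hρf, ← integral_sub (hint p.1 p.2) (hint q.1 q.2)]
    have habs : |∫ g, (ρ (g • p.1) (g • p.2) * f g - ρ (g • q.1) (g • q.2) * f g) ∂lam|
        ≤ ∫ g, ‖ρ (g • p.1) (g • p.2) * f g - ρ (g • q.1) (g • q.2) * f g‖ ∂lam := by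
      rw [← Real.norm_eq_abs]
      exact norm_integral_le_integral_norm _
    refine lt_of_le_of_lt (le_trans habs ?_) (show ε/2 < ε by linarith)
    have : ∫ g, ‖ρ (g • p.1) (g • p.2) * f g - ρ (g • q.1) (g • q.2) * f g‖ ∂lam
        ≤ ∫ g, (ε/2) * f g ∂lam := by
      refine integral_mono ((hint p.1 p.2).sub (hint q.1 q.2)).norm
        (hf_int.const_mul _) ?_
      intro g
      dsimp only
      rw [Real.norm_eq_abs, ← sub_mul, abs_mul, abs_of_nonneg (hfpos g).le]
      exact mul_le_mul_of_nonneg_right (key g) (hfpos g).le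
    calc _ ≤ ∫ g, (ε/2) * f g ∂lam := this
      _ = (ε/2) * ∫ g, f g ∂lam := integral_const_mul _ _
      _ = ε/2 := by rw [hfint, mul_one]
  · -- definiteness
    intro x y hxy
    by_contra hne
    obtain ⟨g₀, hg₀⟩ := hρgen x y hne
    rw [hρf x y] at hxy
    have hnn : 0 ≤ᵐ[lam] fun g : G => ρ (g • x) (g • y) * f g := by
      filter_upwards with g
      exact mul_nonneg (hρnonneg _ _) (hfpos g).le
    have hae : (fun g : G => ρ (g • x) (g • y) * f g) =ᵐ[lam] 0 :=
      (integral_eq_zero_iff_of_nonneg_ae hnn (hint x y)).1 hxy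
    have heq : (fun g : G => ρ (g • x) (g • y) * f g) = 0 :=
      (Continuous.ae_eq_iff_eq lam (hcontf x y) continuous_const).1 hae
    have := congrFun heq g₀
    simp only [Pi.zero_apply] at this
    exact absurd this (ne_of_gt (mul_pos hg₀ (hfpos g₀)))
end

section
/- Let G be an lcsc group with Haar measure λ acting jointly continuously on a Polish metric space (X, d_X), with the action map G × X → X uniformly continuous. Let ρ be a uniformly continuous 1-bounded pseudo-metric on X and let f : G → (0,∞) be a continuous function with ∫_G f dλ = 1, and define ρ_f(x,y) = ∫_G ρ(gx,gy) f(g) dλ(g). Then for every ε' > 0 there exists ε'_f > 0 such that for all x, y ∈ X, if ρ(x,y) > ε' then ρ_f(x,y) > ε'_f. -/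
open MeasureTheory Metric

/-- (Separation transfer from `ρ` to `ρ_f`, used in the proof of Lemma `lem:metric`):
with `G` an lcsc group acting uniformly on a Polish metric space `X`,
`ρ` a uniformly continuous 1-bounded pseudo-metric on `X`, `f : G → (0,∞)`
continuous with `∫ f dλ = 1`, and `ρ_f(x,y) = ∫ ρ(gx,gy) f(g) dλ(g)`:
for every `ε' > 0` there exists `ε'_f > 0` such that `ρ(x,y) > ε'` implies
`ρ_f(x,y) > ε'_f`. -/
theorem rho_f_separation
    {G X : Type*} [Group G] [MetricSpace G] [IsTopologicalGroup G]
    [SecondCountableTopology G] [LocallyCompactSpace G] [ProperSpace G]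
    [MeasurableSpace G] [BorelSpace G]
    (lam : Measure G) [lam.IsHaarMeasure]
    (hleft : ∀ h x y : G, dist (h * x) (h * y) = dist x y)
    [MetricSpace X] [PolishSpace X]
    [MulAction G X]
    (hact : UniformContinuous fun p : G × X => p.1 • p.2)
    (ρ : X → X → ℝ)
    (hρrefl : ∀ x, ρ x x = 0)
    (hρsymm : ∀ x y, ρ x y = ρ y x)
    (hρtri : ∀ x y z, ρ x z ≤ ρ x y + ρ y z)
    (hρnonneg : ∀ x y, 0 ≤ ρ x y)
    (hρbdd : ∀ x y, ρ x y ≤ 1)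
    (hρuc : UniformContinuous fun p : X × X => ρ p.1 p.2)
    (f : G → ℝ) (hfcont : Continuous f) (hfpos : ∀ g, 0 < f g)
    (hfint : ∫ g, f g ∂lam = 1)
    (ρf : X → X → ℝ)
    (hρf : ∀ x y, ρf x y = ∫ g, ρ (g • x) (g • y) * f g ∂lam) :
    ∀ ε' > (0 : ℝ), ∃ εf > (0 : ℝ), ∀ x y : X, ε' < ρ x y → εf < ρf x y := by

  intro ε' hε'
  obtain ⟨δ₁, hδ₁, hρδ⟩ := Metric.uniformContinuous_iff.mp hρuc (ε' / 2) (by linarith)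
  obtain ⟨δ₂, hδ₂, hactδ⟩ := Metric.uniformContinuous_iff.mp hact δ₁ hδ₁
  set B := Metric.ball (1 : G) δ₂ with hB
  have hBpos : 0 < lam B := Metric.isOpen_ball.measure_pos lam ⟨1, Metric.mem_ball_self hδ₂⟩
  have hfi : Integrable f lam := by
    by_contra h
    rw [integral_undef h] at hfint; norm_num at hfint
  have hfiB : IntegrableOn f B lam := hfi.integrableOn
  have hfnn : ∀ᵐ g ∂lam, 0 ≤ f g := Filter.Eventually.of_forall fun g => (hfpos g).le
  have hIB : 0 < ∫ g in B, f g ∂lam := by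
    rw [setIntegral_pos_iff_support_of_nonneg_ae (ae_restrict_of_ae hfnn) hfiB]
    have hsupp : Function.support f = Set.univ := by
      ext g; simp [Function.support, (hfpos g).ne']
    rw [hsupp]; simpa using hBpos
  refine ⟨(ε' / 4) * ∫ g in B, f g ∂lam, by positivity, ?_⟩
  intro x y hxy
  have key : ∀ g ∈ B, ε' / 2 ≤ ρ (g • x) (g • y) := by
    intro g hg
    have hgB : dist g 1 < δ₂ := Metric.mem_ball.mp hg
    have hgx : dist (g • x) x < δ₁ := by
      have := hactδ (a := (g, x)) (b := (1, x)) (by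
        simp [Prod.dist_eq, hgB, hδ₂])
      simpa using this
    have hgy : dist (g • y) y < δ₁ := by
      have := hactδ (a := (g, y)) (b := (1, y)) (by
        simp [Prod.dist_eq, hgB, hδ₂])
      simpa using this
    have hρ2 : dist (ρ (g • x) (g • y)) (ρ x y) < ε' / 2 := by
      have := hρδ (a := ((g • x, g • y))) (b := ((x, y))) (by
        simp [Prod.dist_eq, hgx, hgy])
      simpa using this
    have := abs_lt.mp (by simpa [Real.dist_eq] using hρ2)
    linarith [this.1]
  have hcontact : Continuous fun p : G × X => p.1 • p.2 := hact.continuous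
  have hρc : Continuous fun p : X × X => ρ p.1 p.2 := hρuc.continuous
  have hcont : Continuous fun g : G => ρ (g • x) (g • y) * f g := by
    have h1 : Continuous fun g : G => g • x :=
      hcontact.comp (continuous_id.prodMk continuous_const)
    have h2 : Continuous fun g : G => g • y :=
      hcontact.comp (continuous_id.prodMk continuous_const)
    exact (hρc.comp (h1.prodMk h2)).mul hfcont
  have hint : Integrable (fun g : G => ρ (g • x) (g • y) * f g) lam := by
    refine hfi.mono' hcont.aestronglyMeasurable ?_
    filter_upwards with g
    rw [Real.norm_of_nonneg (mul_nonneg (hρnonneg _ _) (hfpos g).le)]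
    calc ρ (g • x) (g • y) * f g ≤ 1 * f g :=
          mul_le_mul_of_nonneg_right (hρbdd _ _) (hfpos g).le
      _ = f g := one_mul _
  have hnn : ∀ᵐ g ∂lam, 0 ≤ ρ (g • x) (g • y) * f g :=
    Filter.Eventually.of_forall fun g => mul_nonneg (hρnonneg _ _) (hfpos g).le
  have step1 : ∫ g in B, ρ (g • x) (g • y) * f g ∂lam ≤ ρf x y := by
    rw [hρf]
    exact setIntegral_le_integral hint hnn
  have step2 : (ε' / 2) * ∫ g in B, f g ∂lam ≤ ∫ g in B, ρ (g • x) (g • y) * f g ∂lam := by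
    rw [← integral_const_mul]
    refine setIntegral_mono_on (hfiB.const_mul _) (hint.integrableOn) measurableSet_ball ?_
    intro g hg
    exact mul_le_mul_of_nonneg_right (key g hg) (hfpos g).le
  have : (ε' / 4) * ∫ g in B, f g ∂lam < (ε' / 2) * ∫ g in B, f g ∂lam := by
    apply mul_lt_mul_of_pos_right _ hIB
    linarith
  linarith
end

section
/- Let G be an lcsc group with Haar measure λ acting jointly continuously on a Polish metric space X, let ρ be a continuous 1-bounded pseudo-metric on X, and let f : G → (0,∞) be a continuous function with ∫_G f dλ = 1; define ρ_f(x,y) = ∫_G ρ(gx,gy) f(g) dλ(g). For every pre-compact open neighborhood U_f of the identity in G and every δ_f > 0, there exist δ with 0 < δ < δ_f/10 and a pre-compact open set W ⊆ G with U_f ⊆ W, such that for all x, y ∈ X: if λ({g ∈ W : ρ(gx,gy) > δ}) < δ·λ(W), then ρ_f(x,y) < δ_f/2. -/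
open MeasureTheory

/-- Claim 1 in the proof of Lemma `lem:metric`: with `G` an lcsc group with Haar
measure `lam` acting jointly continuously on a Polish metric space `X`, `ρ` a
continuous 1-bounded pseudo-metric, `f : G → (0,∞)` continuous with `∫ f dλ = 1`
and `ρ_f(x,y) = ∫ ρ(gx,gy) f(g) dλ(g)`: for every pre-compact open neighborhood
`U_f` of the identity and `δ_f > 0` there exist `0 < δ < δ_f/10` and a pre-compact
open set `W ⊇ U_f` such that whenever `λ({g ∈ W : ρ(gx,gy) > δ}) < δ·λ(W)`,
we have `ρ_f(x,y) < δ_f/2`. -/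
theorem claim_one_rho_f_small
    {G X : Type*} [Group G] [TopologicalSpace G] [IsTopologicalGroup G]
    [LocallyCompactSpace G] [SecondCountableTopology G]
    [MeasurableSpace G] [BorelSpace G]
    (lam : Measure G) [lam.IsHaarMeasure]
    [MetricSpace X] [PolishSpace X]
    [MulAction G X] [ContinuousSMul G X]
    (ρ : X → X → ℝ)
    (hρrefl : ∀ x, ρ x x = 0)
    (hρsymm : ∀ x y, ρ x y = ρ y x)
    (hρtri : ∀ x y z, ρ x z ≤ ρ x y + ρ y z)
    (hρnonneg : ∀ x y, 0 ≤ ρ x y)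
    (hρbdd : ∀ x y, ρ x y ≤ 1)
    (hρcont : Continuous fun p : X × X => ρ p.1 p.2)
    (f : G → ℝ) (hfcont : Continuous f) (hfpos : ∀ g, 0 < f g)
    (hfint : ∫ g, f g ∂lam = 1)
    (ρf : X → X → ℝ)
    (hρf : ∀ x y, ρf x y = ∫ g, ρ (g • x) (g • y) * f g ∂lam)
    (Uf : Set G) (hUopen : IsOpen Uf) (hUone : (1 : G) ∈ Uf)
    (hUcpt : IsCompact (closure Uf))
    (δf : ℝ) (hδf : 0 < δf) :
    ∃ (δ : ℝ) (W : Set G), 0 < δ ∧ δ < δf / 10 ∧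
      IsOpen W ∧ IsCompact (closure W) ∧ Uf ⊆ W ∧
      ∀ x y : X,
        lam {g ∈ W | δ < ρ (g • x) (g • y)} < ENNReal.ofReal δ * lam W →
        ρf x y < δf / 2 := by
  -- f is integrable
  have hfi : Integrable f lam := by
    by_contra h
    rw [integral_undef h] at hfint; norm_num at hfint
  -- a compact set outside of which ∫ f < δf/8
  obtain ⟨K, hKcpt, hKm, hKtail⟩ :
      ∃ K : Set G, IsCompact K ∧ MeasurableSet K ∧ ∫ g in Kᶜ, f g ∂lam < δf / 8 := by
    obtain ⟨E⟩ : Nonempty (CompactExhaustion G) := ⟨CompactExhaustion.choice G⟩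
    set s : ℕ → Set G := fun n => closure (E n) with hs
    have hsm : ∀ n, MeasurableSet (s n) := fun n => isClosed_closure.measurableSet
    have hmono : Monotone s := fun a b hab => closure_mono (E.subset hab)
    have hUnion : (⋃ n, s n) = Set.univ := by
      apply Set.eq_univ_of_univ_subset
      rw [← E.iUnion_eq]
      exact Set.iUnion_subset fun n => (subset_closure.trans (Set.subset_iUnion s n))
    have htend := tendsto_setIntegral_of_monotone hsm hmono (by rw [hUnion]; exact hfi.integrableOn)
    rw [hUnion, setIntegral_univ, hfint] at htend
    have : ∀ᶠ n in Filter.atTop, 1 - δf / 8 < ∫ g in s n, f g ∂lam :=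
      htend.eventually (eventually_gt_nhds (by linarith))
    obtain ⟨n, hn⟩ := this.exists
    refine ⟨s n, (E.isCompact n).closure, hsm n, ?_⟩
    have hadd := integral_add_compl (hsm n) hfi
    rw [hfint] at hadd
    linarith
  -- an open pre-compact W containing K ∪ closure Uf
  obtain ⟨W, hWopen, hKW, hWcl⟩ :=
    exists_isOpen_superset_and_isCompact_closure (hKcpt.union hUcpt)
  have hUW : Uf ⊆ W := subset_closure.trans (Set.subset_union_right.trans hKW)
  have hKsubW : K ⊆ W := Set.subset_union_left.trans hKW
  have hWne : (1 : G) ∈ W := hUW hUone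
  -- bound M on f over closure W
  obtain ⟨C, hC⟩ := hWcl.exists_bound_of_continuousOn hfcont.continuousOn
  set M : ℝ := max C 1 with hM
  have hMpos : (0 : ℝ) < M := lt_of_lt_of_le one_pos (le_max_right _ _)
  have hMbd : ∀ g ∈ W, f g ≤ M := fun g hg =>
    le_trans (le_trans (le_abs_self _) (hC g (subset_closure hg))) (le_max_left _ _)
  -- measure of W
  have hWfin : lam W ≠ ⊤ :=
    (lt_of_le_of_lt (measure_mono subset_closure) hWcl.measure_lt_top).ne
  set L : ℝ := (lam W).toReal with hL
  have hLnn : 0 ≤ L := ENNReal.toReal_nonneg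
  -- choose δ
  set δ : ℝ := min (δf / 20) (δf / (8 * M * (L + 1))) with hδ
  have hδpos : 0 < δ := by
    apply lt_min (by linarith)
    positivity
  have hδ20 : δ ≤ δf / 20 := min_le_left _ _
  have hδM : δ * (M * (L + 1)) ≤ δf / 8 := by
    have h1 : δ ≤ δf / (8 * M * (L + 1)) := min_le_right _ _
    have h2 : 0 < M * (L + 1) := by positivity
    have h3 : δ * (M * (L + 1)) ≤ δf / (8 * M * (L + 1)) * (M * (L + 1)) :=
      mul_le_mul_of_nonneg_right h1 h2.le
    have h4 : δf / (8 * M * (L + 1)) * (M * (L + 1)) = δf / 8 := by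
      field_simp
    linarith
  refine ⟨δ, W, hδpos, by linarith, hWopen, hWcl, hUW, ?_⟩
  intro x y hA
  set r : G → ℝ := fun g => ρ (g • x) (g • y) with hr
  have hrcont : Continuous r := by
    show Continuous fun g : G => ρ (g • x) (g • y)
    exact hρcont.comp
      ((continuous_id.smul continuous_const).prodMk (continuous_id.smul continuous_const))
  have hrnn : ∀ g, 0 ≤ r g := fun g => hρnonneg _ _
  have hr1 : ∀ g, r g ≤ 1 := fun g => hρbdd _ _
  set h : G → ℝ := fun g => r g * f g with hh
  have hhint : Integrable h lam := by
    refine hfi.mono (hrcont.mul hfcont).aestronglyMeasurable (Filter.Eventually.of_forall ?_)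
    intro g
    rw [Real.norm_eq_abs, Real.norm_eq_abs, abs_of_nonneg (mul_nonneg (hrnn g) (hfpos g).le),
      abs_of_nonneg (hfpos g).le]
    calc r g * f g ≤ 1 * f g := mul_le_mul_of_nonneg_right (hr1 g) (hfpos g).le
      _ = f g := one_mul _
  have hhnn : ∀ g, 0 ≤ h g := fun g => mul_nonneg (hrnn g) (hfpos g).le
  set A : Set G := {g ∈ W | δ < r g} with hAdef
  have hAopen : IsOpen A := by
    have : A = W ∩ r ⁻¹' (Set.Ioi δ) := by ext g; simp [hAdef, Set.mem_setOf_eq]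
    rw [this]; exact hWopen.inter (isOpen_Ioi.preimage hrcont)
  have hAm : MeasurableSet A := hAopen.measurableSet
  have hAW : A ⊆ W := fun g hg => hg.1
  have hAfin : lam A ≠ ⊤ := (lt_of_le_of_lt (measure_mono hAW) (lt_of_le_of_lt
    (measure_mono subset_closure) hWcl.measure_lt_top)).ne
  -- split the integral
  have hsplit : ρf x y = (∫ g in W, h g ∂lam) + ∫ g in Wᶜ, h g ∂lam := by
    rw [hρf x y, ← integral_add_compl hWopen.measurableSet hhint]
  -- tail estimate
  have htail : ∫ g in Wᶜ, h g ∂lam < δf / 8 := by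
    have h1 : ∫ g in Wᶜ, h g ∂lam ≤ ∫ g in Wᶜ, f g ∂lam := by
      refine setIntegral_mono_on hhint.integrableOn hfi.integrableOn
        hWopen.measurableSet.compl (fun g _ => ?_)
      calc r g * f g ≤ 1 * f g := mul_le_mul_of_nonneg_right (hr1 g) (hfpos g).le
        _ = f g := one_mul _
    have h2 : ∫ g in Wᶜ, f g ∂lam ≤ ∫ g in Kᶜ, f g ∂lam := by
      refine setIntegral_mono_set hfi.integrableOn
        (Filter.Eventually.of_forall fun g => (hfpos g).le)
        (Filter.Eventually.of_forall (Set.compl_subset_compl.2 hKsubW))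
    linarith
  -- main estimate on W
  have hmain : ∫ g in W, h g ∂lam ≤ δ + M * (lam A).toReal := by
    have hbound : ∀ g ∈ W, h g ≤ δ * f g + A.indicator (fun _ => M) g := by
      intro g hg
      by_cases hgA : g ∈ A
      · rw [Set.indicator_of_mem hgA]
        have : h g ≤ M := le_trans (by
          calc r g * f g ≤ 1 * f g := mul_le_mul_of_nonneg_right (hr1 g) (hfpos g).le
            _ = f g := one_mul _) (hMbd g hg)
        nlinarith [hfpos g, hδpos]
      · rw [Set.indicator_of_notMem hgA]
        have hrle : r g ≤ δ := by
          by_contra hlt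
          exact hgA ⟨hg, lt_of_not_ge hlt⟩
        simpa using mul_le_mul_of_nonneg_right hrle (hfpos g).le
    have hind : IntegrableOn (fun g => δ * f g + A.indicator (fun _ => M) g) W lam := by
      refine ((hfi.const_mul δ).integrableOn).add ?_
      refine (IntegrableOn.integrable_indicator ?_ hAm).integrableOn
      rw [integrableOn_const_iff]
      exact Or.inr (lt_of_le_of_lt (measure_mono hAW) (lt_of_le_of_lt
        (measure_mono subset_closure) hWcl.measure_lt_top))
    have h1 : ∫ g in W, h g ∂lam ≤ ∫ g in W, (δ * f g + A.indicator (fun _ => M) g) ∂lam :=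
      setIntegral_mono_on hhint.integrableOn hind hWopen.measurableSet hbound
    have h2 : ∫ g in W, (δ * f g + A.indicator (fun _ => M) g) ∂lam
        = δ * ∫ g in W, f g ∂lam + ∫ g in W, A.indicator (fun _ => M) g ∂lam := by
      rw [integral_add ((hfi.const_mul δ).integrableOn) ?_, integral_const_mul]
      refine (IntegrableOn.integrable_indicator ?_ hAm).integrableOn
      rw [integrableOn_const_iff]
      exact Or.inr (lt_of_le_of_lt (measure_mono hAW) (lt_of_le_of_lt
        (measure_mono subset_closure) hWcl.measure_lt_top))
    have h3 : ∫ g in W, A.indicator (fun _ => M) g ∂lam = M * (lam A).toReal := by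
      rw [setIntegral_indicator hAm]
      have : W ∩ A = A := Set.inter_eq_self_of_subset_right hAW
      rw [this, setIntegral_const, smul_eq_mul, mul_comm]; rfl
    have h4 : ∫ g in W, f g ∂lam ≤ 1 := by
      rw [← hfint]
      exact setIntegral_le_integral hfi (Filter.Eventually.of_forall fun g => (hfpos g).le)
    have h5 : δ * ∫ g in W, f g ∂lam ≤ δ := by nlinarith [hδpos]
    linarith [h1, h2 ▸ h1, h3, h5]
  -- convert measure hypothesis
  have hAreal : (lam A).toReal < δ * L := by
    have hne : ENNReal.ofReal δ * lam W ≠ ⊤ := ENNReal.mul_ne_top ENNReal.ofReal_ne_top hWfin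
    have := ENNReal.toReal_lt_toReal hAfin hne |>.2 hA
    rwa [ENNReal.toReal_mul, ENNReal.toReal_ofReal hδpos.le] at this
  have hMA : M * (lam A).toReal ≤ δf / 8 := by
    have : M * (lam A).toReal ≤ M * (δ * L) :=
      mul_le_mul_of_nonneg_left hAreal.le hMpos.le
    nlinarith [hδM, hδpos, hMpos]
  calc ρf x y = (∫ g in W, h g ∂lam) + ∫ g in Wᶜ, h g ∂lam := hsplit
    _ < (δ + M * (lam A).toReal) + δf / 8 := by linarith
    _ ≤ δf / 20 + δf / 8 + δf / 8 := by linarith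
    _ < δf / 2 := by linarith
end

section
/- Let (X, d_X) and (Y, d_Y) be Polish metric spaces with continuous 1-bounded pseudo-metrics ρ_X on X and ρ_Y on Y. Let μ be a Borel probability measure on X, let τ, ε > 0, let L ⊆ X be a Borel set with μ(L) ≥ 1 − τ, and let Φ : X → Y be a Borel measurable map. Let (M, ν) be a probability space and let φ_1, φ_2 : M → X be measurable maps with (φ_1)_*ν = (φ_2)_*ν = μ. If ∫_M ρ_Y(Φ(φ_1(p)), Φ(φ_2(p))) dν(p) < ε, then ∫_M ρ_X(φ_1(p), φ_2(p)) dν(p) ≤ 2τ + √ε + sup{ρ_X(x,y) : x, y ∈ L and ρ_Y(Φ(x),Φ(y)) ≤ √ε}. -/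
/-!
Call a point `p ∈ M` bad if `φ₁ p ∉ L`, `φ₂ p ∉ L`, or `ρ_Y(Φ φ₁ p, Φ φ₂ p) ≥ √ε`. Since each
`φᵢ` pushes `ν` to `μ`, the first two events have measure at most `τ`, and by Markov's inequality
the third has measure at most `ε / √ε = √ε`. At a good point `ρ_X(φ₁ p, φ₂ p)` is bounded by the
supremum, and at a bad point by `1`; integrating gives the estimate.
-/

open MeasureTheory

section

variable {M X : Type*} [MeasurableSpace M] [MeasurableSpace X]

lemma measureReal_preimage_compl_le {ν : Measure M} {μ : Measure X} [IsProbabilityMeasure μ]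
    {φ : M → X} (hφ : Measurable φ) (hpush : ν.map φ = μ) {L : Set X} (hL : MeasurableSet L)
    {τ : ℝ} (hμL : ENNReal.ofReal (1 - τ) ≤ μ L) : ν.real (φ ⁻¹' Lᶜ) ≤ τ := by
  rw [← map_measureReal_apply hφ hL.compl, hpush, measureReal_compl hL, probReal_univ]
  have := (ENNReal.ofReal_le_iff_le_toReal (measure_ne_top μ L)).1 hμL
  rw [measureReal_def]
  linarith

lemma measureReal_sqrt_le_le_sqrt_of_integral_lt {ν : Measure M} {f : M → ℝ}
    (hf0 : 0 ≤ᵐ[ν] f) (hf : Integrable f ν) {ε : ℝ} (hε : 0 < ε) (hfε : ∫ p, f p ∂ν < ε) :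
    ν.real {p | √ε ≤ f p} ≤ √ε := by
  have hmarkov := mul_meas_ge_le_integral_of_nonneg hf0 hf √ε
  have hsqrt : 0 < √ε := Real.sqrt_pos.mpr hε
  rw [← Real.mul_self_sqrt hε.le] at hfε
  exact (lt_of_mul_lt_mul_left (hmarkov.trans_lt hfε) hsqrt.le).le

lemma integral_le_measureReal_add_of_le_of_compl {ν : Measure M} [IsProbabilityMeasure ν]
    {g : M → ℝ} (hg : Integrable g ν) {B : Set M} (hB : MeasurableSet B) {S : ℝ} (hS : 0 ≤ S)
    (hg1 : ∀ p, g p ≤ 1) (hgS : ∀ p ∉ B, g p ≤ S) : ∫ p, g p ∂ν ≤ ν.real B + S := by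
  have hle : g ≤ fun p => B.indicator 1 p + S := by
    intro p
    by_cases hp : p ∈ B
    · simp only [Set.indicator_of_mem hp, Pi.one_apply]
      linarith [hg1 p]
    · simpa [Set.indicator_of_notMem hp] using hgS p hp
  have hind : Integrable (B.indicator (1 : M → ℝ)) ν := (integrable_const 1).indicator hB
  calc ∫ p, g p ∂ν ≤ ∫ p, (B.indicator 1 p + S) ∂ν :=
        integral_mono hg (hind.add (integrable_const S)) hle
    _ = ν.real B + S := by
        rw [integral_add hind (integrable_const S), integral_indicator_one hB, integral_const,
          probReal_univ, one_smul]

lemma integrable_comp_prodMk_of_continuous [TopologicalSpace X] [SecondCountableTopology X]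
    [OpensMeasurableSpace X] {ν : Measure M} [IsFiniteMeasure ν] {d : X → X → ℝ}
    (hd : Continuous fun q : X × X => d q.1 q.2) (hd0 : ∀ x y, 0 ≤ d x y) (hd1 : ∀ x y, d x y ≤ 1)
    {φ ψ : M → X} (hφ : Measurable φ) (hψ : Measurable ψ) :
    Integrable (fun p => d (φ p) (ψ p)) ν := by
  refine .of_bound (hd.measurable2 hφ hψ).aestronglyMeasurable 1 (ae_of_all _ ?_)
  intro p
  rw [Real.norm_of_nonneg (hd0 _ _)]
  exact hd1 _ _

end

theorem pullback_integral_estimate_general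
    {X Y : Type*} [MetricSpace X] [PolishSpace X] [MeasurableSpace X] [BorelSpace X]
    [MetricSpace Y] [PolishSpace Y] [MeasurableSpace Y] [BorelSpace Y]
    (ρX : X → X → ℝ)
    (hXnonneg : ∀ x y, 0 ≤ ρX x y)
    (hXbdd : ∀ x y, ρX x y ≤ 1)
    (hXcont : Continuous fun p : X × X => ρX p.1 p.2)
    (ρY : Y → Y → ℝ)
    (hYnonneg : ∀ x y, 0 ≤ ρY x y)
    (hYbdd : ∀ x y, ρY x y ≤ 1)
    (hYcont : Continuous fun p : Y × Y => ρY p.1 p.2)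
    (μ : Measure X) [IsProbabilityMeasure μ]
    (τ ε : ℝ) (hε : 0 < ε)
    (L : Set X) (hLmeas : MeasurableSet L)
    (hL : ENNReal.ofReal (1 - τ) ≤ μ L)
    (Φ : X → Y) (hΦ : Measurable Φ)
    {M : Type*} [MeasurableSpace M] (ν : Measure M) [IsProbabilityMeasure ν]
    (φ₁ φ₂ : M → X) (hφ₁ : Measurable φ₁) (hφ₂ : Measurable φ₂)
    (hpush₁ : ν.map φ₁ = μ) (hpush₂ : ν.map φ₂ = μ)
    (hint : ∫ p, ρY (Φ (φ₁ p)) (Φ (φ₂ p)) ∂ν < ε) :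
    ∫ p, ρX (φ₁ p) (φ₂ p) ∂ν ≤
      2 * τ + Real.sqrt ε +
        sSup {r : ℝ | ∃ x ∈ L, ∃ y ∈ L,
          ρY (Φ x) (Φ y) ≤ Real.sqrt ε ∧ r = ρX x y} := by
  set T := {r : ℝ | ∃ x ∈ L, ∃ y ∈ L, ρY (Φ x) (Φ y) ≤ √ε ∧ r = ρX x y}
  have hT : BddAbove T := ⟨1, by rintro _ ⟨x, -, y, -, -, rfl⟩; exact hXbdd x y⟩
  have hT0 : 0 ≤ sSup T := Real.sSup_nonneg (by rintro _ ⟨x, -, y, -, -, rfl⟩; exact hXnonneg x y)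
  have hf : Integrable (fun p => ρY (Φ (φ₁ p)) (Φ (φ₂ p))) ν :=
    integrable_comp_prodMk_of_continuous hYcont hYnonneg hYbdd (hΦ.comp hφ₁) (hΦ.comp hφ₂)
  set bad := {p | √ε ≤ ρY (Φ (φ₁ p)) (Φ (φ₂ p))}
  have hbad : MeasurableSet bad :=
    measurableSet_le measurable_const (hYcont.measurable2 (hΦ.comp hφ₁) (hΦ.comp hφ₂))
  set B := φ₁ ⁻¹' Lᶜ ∪ φ₂ ⁻¹' Lᶜ ∪ bad
  have hB : MeasurableSet B := ((hφ₁ hLmeas.compl).union (hφ₂ hLmeas.compl)).union hbad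
  have hνB : ν.real B ≤ 2 * τ + √ε := calc
    ν.real B ≤ ν.real (φ₁ ⁻¹' Lᶜ) + ν.real (φ₂ ⁻¹' Lᶜ) + ν.real bad :=
      (measureReal_union_le _ _).trans (add_le_add_left (measureReal_union_le _ _) _)
    _ ≤ τ + τ + √ε := by
      gcongr
      · exact measureReal_preimage_compl_le hφ₁ hpush₁ hLmeas hL
      · exact measureReal_preimage_compl_le hφ₂ hpush₂ hLmeas hL
      · exact measureReal_sqrt_le_le_sqrt_of_integral_lt (ae_of_all _ fun _ => hYnonneg _ _) hf hε
          hint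
    _ = 2 * τ + √ε := by ring
  have hgood : ∀ p ∉ B, ρX (φ₁ p) (φ₂ p) ≤ sSup T := by
    intro p hp
    simp only [B, bad, Set.mem_union, Set.mem_preimage, Set.mem_compl_iff, Set.mem_ofPred_eq,
      not_or, not_not, not_le] at hp
    exact le_csSup hT ⟨φ₁ p, hp.1.1, φ₂ p, hp.1.2, hp.2.le, rfl⟩
  calc ∫ p, ρX (φ₁ p) (φ₂ p) ∂ν ≤ ν.real B + sSup T :=
        integral_le_measureReal_add_of_le_of_compl
          (integrable_comp_prodMk_of_continuous hXcont hXnonneg hXbdd hφ₁ hφ₂) hB hT0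
          (fun _ => hXbdd _ _) hgood
    _ ≤ 2 * τ + √ε + sSup T := by linarith

/-- Claim 2 in the proof of Theorem `thm:measure`: let `ρ_X, ρ_Y` be continuous
1-bounded pseudo-metrics on Polish metric spaces `X, Y`, `μ` a Borel probability
measure on `X`, `τ, ε > 0`, `L ⊆ X` Borel with `μ(L) ≥ 1-τ`, and `Φ : X → Y`
Borel measurable. If `φ₁, φ₂ : M → X` are measurable with `(φᵢ)_*ν = μ` on a
probability space `(M,ν)` and `∫ ρ_Y(Φφ₁, Φφ₂) dν < ε`, then
`∫ ρ_X(φ₁,φ₂) dν ≤ 2τ + √ε + sup{ρ_X(x,y) : x,y ∈ L, ρ_Y(Φx,Φy) ≤ √ε}`. -/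
theorem pullback_integral_estimate
    {X Y : Type*} [MetricSpace X] [PolishSpace X] [MeasurableSpace X] [BorelSpace X]
    [MetricSpace Y] [PolishSpace Y] [MeasurableSpace Y] [BorelSpace Y]
    (ρX : X → X → ℝ)
    (hXrefl : ∀ x, ρX x x = 0)
    (hXsymm : ∀ x y, ρX x y = ρX y x)
    (hXtri : ∀ x y z, ρX x z ≤ ρX x y + ρX y z)
    (hXnonneg : ∀ x y, 0 ≤ ρX x y)
    (hXbdd : ∀ x y, ρX x y ≤ 1)
    (hXcont : Continuous fun p : X × X => ρX p.1 p.2)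
    (ρY : Y → Y → ℝ)
    (hYrefl : ∀ y, ρY y y = 0)
    (hYsymm : ∀ x y, ρY x y = ρY y x)
    (hYtri : ∀ x y z, ρY x z ≤ ρY x y + ρY y z)
    (hYnonneg : ∀ x y, 0 ≤ ρY x y)
    (hYbdd : ∀ x y, ρY x y ≤ 1)
    (hYcont : Continuous fun p : Y × Y => ρY p.1 p.2)
    (μ : Measure X) [IsProbabilityMeasure μ]
    (τ ε : ℝ) (hτ : 0 < τ) (hε : 0 < ε)
    (L : Set X) (hLmeas : MeasurableSet L)
    (hL : ENNReal.ofReal (1 - τ) ≤ μ L)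
    (Φ : X → Y) (hΦ : Measurable Φ)
    {M : Type*} [MeasurableSpace M] (ν : Measure M) [IsProbabilityMeasure ν]
    (φ₁ φ₂ : M → X) (hφ₁ : Measurable φ₁) (hφ₂ : Measurable φ₂)
    (hpush₁ : ν.map φ₁ = μ) (hpush₂ : ν.map φ₂ = μ)
    (hint : ∫ p, ρY (Φ (φ₁ p)) (Φ (φ₂ p)) ∂ν < ε) :
    ∫ p, ρX (φ₁ p) (φ₂ p) ∂ν ≤
      2 * τ + Real.sqrt ε +
        sSup {r : ℝ | ∃ x ∈ L, ∃ y ∈ L,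
          ρY (Φ x) (Φ y) ≤ Real.sqrt ε ∧ r = ρX x y} :=
  pullback_integral_estimate_general ρX hXnonneg hXbdd hXcont ρY hYnonneg hYbdd hYcont μ τ ε hε L
    hLmeas hL Φ hΦ ν φ₁ φ₂ hφ₁ hφ₂ hpush₁ hpush₂ hint
end
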